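/- arXiv:1505.05017 — 2 statements merged into one kernel-verified Lean document; each statement's English description precedes it below -/
import Mathlib

section
/- Let L be a self-adjoint positive operator on a Hilbert space X, diagonalizable with eigenvalues bounded below by ω² > 0. Then any solution of p'' = L p with initial data p(0), p'(0) satisfies, for t ∈ [0,T], ‖p(t)‖ ≤ (1/2) e^{-ωt}(‖p(0)‖ + ‖L^{-1/2} p'(0)‖) + (1/2) e^{-ω(T-t)}(‖e^{L^{1/2}T} p(0)‖ + ‖e^{L^{1/2}T} L^{-1/2} p'(0)‖). -/
open scoped ENNReal

section helper
variable {ι : Type*}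

lemma memlp_mul_of_bdd (c : ι → ℝ) (C : ℝ) (hc : ∀ i, |c i| ≤ C)
    (x : lp (fun _ : ι => ℝ) 2) : Memℓp (fun i => c i * x i) 2 := by
  have h2 : (0:ℝ) < (2 : ℝ≥0∞).toReal := by norm_num
  apply memℓp_gen
  have hx := (lp.memℓp x).summable h2
  refine Summable.of_nonneg_of_le (fun i => ?_) (fun i => ?_) (hx.mul_left (C ^ (2:ℝ≥0∞).toReal))
  · positivity
  · have hC : 0 ≤ C := le_trans (abs_nonneg _) (hc i)
    calc ‖c i * x i‖ ^ (2:ℝ≥0∞).toReal = (|c i| * ‖x i‖) ^ (2:ℝ≥0∞).toReal := by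
          simp [norm_mul, Real.norm_eq_abs]
      _ ≤ (C * ‖x i‖) ^ (2:ℝ≥0∞).toReal := by
          apply Real.rpow_le_rpow (by positivity)
            (mul_le_mul_of_nonneg_right (hc i) (norm_nonneg _)) (by norm_num)
      _ = C ^ (2:ℝ≥0∞).toReal * ‖x i‖ ^ (2:ℝ≥0∞).toReal :=
          Real.mul_rpow hC (norm_nonneg _)

lemma norm_mul_of_bdd (c : ι → ℝ) (C : ℝ) (hC : 0 ≤ C) (hc : ∀ i, |c i| ≤ C)
    (x : lp (fun _ : ι => ℝ) 2) :
    ‖(⟨fun i => c i * x i, memlp_mul_of_bdd c C hc x⟩ : lp (fun _ : ι => ℝ) 2)‖ ≤ C * ‖x‖ := by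
  have h2 : (0:ℝ) < (2 : ℝ≥0∞).toReal := by norm_num
  apply lp.norm_le_of_tsum_le h2 (by positivity)
  have hx := (lp.memℓp x).summable h2
  calc (∑' i, ‖c i * x i‖ ^ (2:ℝ≥0∞).toReal)
      ≤ ∑' i, C ^ (2:ℝ≥0∞).toReal * ‖x i‖ ^ (2:ℝ≥0∞).toReal := by
        refine Summable.tsum_le_tsum (fun i => ?_) ((memlp_mul_of_bdd c C hc x).summable h2)
          (hx.mul_left _)
        calc ‖c i * x i‖ ^ (2:ℝ≥0∞).toReal = (|c i| * ‖x i‖) ^ (2:ℝ≥0∞).toReal := by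
              simp [norm_mul, Real.norm_eq_abs]
          _ ≤ (C * ‖x i‖) ^ (2:ℝ≥0∞).toReal := by
              apply Real.rpow_le_rpow (by positivity)
                (mul_le_mul_of_nonneg_right (hc i) (norm_nonneg _)) (by norm_num)
          _ = C ^ (2:ℝ≥0∞).toReal * ‖x i‖ ^ (2:ℝ≥0∞).toReal :=
              Real.mul_rpow hC (norm_nonneg _)
    _ = C ^ (2:ℝ≥0∞).toReal * ∑' i, ‖x i‖ ^ (2:ℝ≥0∞).toReal := tsum_mul_left
    _ = (C * ‖x‖) ^ (2:ℝ≥0∞).toReal := by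
        rw [← lp.norm_rpow_eq_tsum h2 x, ← Real.mul_rpow hC (norm_nonneg _)]
end helper

lemma exists_lp_mul {ι : Type*} (c : ι → ℝ) (C : ℝ) (hC : 0 ≤ C) (hc : ∀ i, |c i| ≤ C)
    (x : lp (fun _ : ι => ℝ) 2) :
    ∃ u : lp (fun _ : ι => ℝ) 2, (∀ i, u i = c i * x i) ∧ ‖u‖ ≤ C * ‖x‖ :=
  ⟨⟨_, memlp_mul_of_bdd c C hc x⟩, fun _ => rfl, norm_mul_of_bdd c C hC hc x⟩

theorem selfadjoint_turnpike_inequality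
    {X : Type*} [NormedAddCommGroup X] [InnerProductSpace ℝ X] [CompleteSpace X]
    {ι : Type*} (φ : HilbertBasis ι ℝ X)
    (ω : ℝ) (hω : 0 < ω) (μ : ι → ℝ) (hμ : ∀ i, ω ^ 2 ≤ μ i)
    (T : ℝ) (hT : 0 < T)
    (p : ℝ → X) (p0 q0 P0 Q0 : X)
    -- q0 = L^{-1/2} p'(0); p(t) = cosh(t L^{1/2}) p(0) + L^{-1/2} sinh(t L^{1/2}) p'(0)
    (hp : ∀ t, ∀ i, φ.repr (p t) i =
      Real.cosh (t * Real.sqrt (μ i)) * φ.repr p0 i +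
        Real.sinh (t * Real.sqrt (μ i)) * φ.repr q0 i)
    -- P0 = e^{L^{1/2} T} p0 and Q0 = e^{L^{1/2} T} q0 are well defined elements of X
    (hP0 : ∀ i, φ.repr P0 i = Real.exp (Real.sqrt (μ i) * T) * φ.repr p0 i)
    (hQ0 : ∀ i, φ.repr Q0 i = Real.exp (Real.sqrt (μ i) * T) * φ.repr q0 i) :
    ∀ t ∈ Set.Icc (0:ℝ) T,
      ‖p t‖ ≤ (1 / 2) * Real.exp (-ω * t) * (‖p0‖ + ‖q0‖) +
        (1 / 2) * Real.exp (-ω * (T - t)) * (‖P0‖ + ‖Q0‖) := by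
  rintro t ⟨ht0, htT⟩
  have hs : ∀ i, ω ≤ Real.sqrt (μ i) := fun i => by
    have := Real.sqrt_le_sqrt (hμ i)
    rwa [Real.sqrt_sq hω.le] at this
  have hC1 : (0:ℝ) ≤ (1 / 2) * Real.exp (-ω * t) := by positivity
  have hC3 : (0:ℝ) ≤ (1 / 2) * Real.exp (-ω * (T - t)) := by positivity
  have hc1 : ∀ i, |(1 / 2) * Real.exp (-(t * Real.sqrt (μ i)))| ≤ (1 / 2) * Real.exp (-ω * t) := by
    intro i
    rw [abs_of_nonneg (by positivity)]
    have h : -(t * Real.sqrt (μ i)) ≤ -ω * t := by nlinarith [hs i]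
    have := Real.exp_le_exp.mpr h
    linarith
  have hc3 : ∀ i, |(1 / 2) * Real.exp (-((T - t) * Real.sqrt (μ i)))|
      ≤ (1 / 2) * Real.exp (-ω * (T - t)) := by
    intro i
    rw [abs_of_nonneg (by positivity)]
    have h : -((T - t) * Real.sqrt (μ i)) ≤ -ω * (T - t) := by nlinarith [hs i]
    have := Real.exp_le_exp.mpr h
    linarith
  obtain ⟨u1, hu1, h1⟩ := exists_lp_mul _ _ hC1 hc1 (φ.repr p0)
  obtain ⟨u2, hu2, h2⟩ := exists_lp_mul _ _ hC1 hc1 (φ.repr q0)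
  obtain ⟨u3, hu3, h3⟩ := exists_lp_mul _ _ hC3 hc3 (φ.repr P0)
  obtain ⟨u4, hu4, h4⟩ := exists_lp_mul _ _ hC3 hc3 (φ.repr Q0)
  have key : φ.repr (p t) = (u1 - u2) + (u3 + u4) := by
    ext i
    have hcoe : ((u1 - u2) + (u3 + u4) : lp (fun _ : ι => ℝ) 2) i
        = u1 i - u2 i + (u3 i + u4 i) := by
      simp [lp.coeFn_add, lp.coeFn_sub]
    rw [hcoe, hu1 i, hu2 i, hu3 i, hu4 i, hp t i, hP0 i, hQ0 i,
      Real.cosh_eq, Real.sinh_eq]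
    have hkey : Real.exp (-((T - t) * Real.sqrt (μ i))) * Real.exp (Real.sqrt (μ i) * T)
        = Real.exp (t * Real.sqrt (μ i)) := by
      rw [← Real.exp_add]; congr 1; ring
    linear_combination (-(φ.repr p0 i + φ.repr q0 i) / 2) * hkey
  have hnorm : ‖p t‖ = ‖φ.repr (p t)‖ := (φ.repr.norm_map (p t)).symm
  have ha : ‖φ.repr p0‖ = ‖p0‖ := φ.repr.norm_map p0
  have hb : ‖φ.repr q0‖ = ‖q0‖ := φ.repr.norm_map q0
  have hA : ‖φ.repr P0‖ = ‖P0‖ := φ.repr.norm_map P0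
  have hB : ‖φ.repr Q0‖ = ‖Q0‖ := φ.repr.norm_map Q0
  rw [ha] at h1; rw [hb] at h2; rw [hA] at h3; rw [hB] at h4
  rw [hnorm, key]
  calc ‖(u1 - u2) + (u3 + u4)‖ ≤ ‖u1 - u2‖ + ‖u3 + u4‖ := norm_add_le _ _
    _ ≤ (‖u1‖ + ‖u2‖) + (‖u3‖ + ‖u4‖) := add_le_add (norm_sub_le _ _) (norm_add_le _ _)
    _ ≤ _ := by rw [mul_add, mul_add]; linarith
end

section
/- Let (u_k), (v_k) be square-summable complex sequences and (δ_k^±) complex numbers with Re(δ_k⁺) ≥ ω > 0 and Re(δ_k⁻) ≤ -ω for all k, and suppose Σ_k (|u_k|² + |e^{δ_k⁺ T}|² |v_k|²) ≤ C ‖y₀‖² for some constant C. Then the function p(t) with Fourier coefficients h_k(t) = u_k e^{δ_k⁻ t} + v_k e^{δ_k⁺ t} satisfies the turnpike inequality ‖p(t)‖ ≤ (e^{-ωt} + e^{-ω(T-t)}) · 2√C · ‖y₀‖ for all t ∈ [0,T]. -/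
/-! At time `t` the decaying part of the `k`-th mode is at most `e^{-ωt} |u_k|`, and the growing
part, written as `e^{δ⁺T}` times a decaying factor, is at most `e^{-ω(T-t)} |e^{δ⁺T}| |v_k|`.
Cauchy–Schwarz on the two parts and Parseval then give
`‖p t‖² ≤ (e^{-2ωt} + e^{-2ω(T-t)}) C ‖y₀‖²`. -/

theorem Complex.norm_exp_mul_ofReal_le {z : ℂ} {c t : ℝ} (hz : z.re ≤ c) (ht : 0 ≤ t) :
    ‖Complex.exp (z * t)‖ ≤ Real.exp (c * t) := by
  rw [Complex.norm_exp, Complex.re_mul_ofReal]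
  exact Real.exp_le_exp.2 (mul_le_mul_of_nonneg_right hz ht)

theorem Complex.norm_exp_mul_ofReal_le_of_le_re {z : ℂ} {c t T : ℝ} (hz : c ≤ z.re)
    (htT : t ≤ T) :
    ‖Complex.exp (z * t)‖ ≤ Real.exp (-c * (T - t)) * ‖Complex.exp (z * T)‖ := by
  have hsplit : z * t = -z * ↑(T - t) + z * T := by push_cast; ring
  rw [hsplit, Complex.exp_add, norm_mul]
  gcongr
  exact Complex.norm_exp_mul_ofReal_le (by simpa using hz) (sub_nonneg.2 htT)

theorem norm_add_sq_le_of_le_mul {E : Type*} [SeminormedAddCommGroup E] {z w : E}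
    {a b x y : ℝ} (hz : ‖z‖ ≤ a * x) (hw : ‖w‖ ≤ b * y) :
    ‖z + w‖ ^ 2 ≤ (a ^ 2 + b ^ 2) * (x ^ 2 + y ^ 2) := by
  have hle : ‖z + w‖ ≤ a * x + b * y := (norm_add_le z w).trans (add_le_add hz hw)
  calc ‖z + w‖ ^ 2 ≤ (a * x + b * y) ^ 2 := pow_le_pow_left₀ (norm_nonneg _) hle 2
    _ ≤ (a ^ 2 + b ^ 2) * (x ^ 2 + y ^ 2) := by nlinarith [sq_nonneg (a * y - b * x)]

namespace HilbertBasis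

variable {ι 𝕜 E : Type*} [RCLike 𝕜] [NormedAddCommGroup E] [InnerProductSpace 𝕜 E]

theorem hasSum_sq_norm_repr (b : HilbertBasis ι 𝕜 E) (x : E) :
    HasSum (fun i => ‖b.repr x i‖ ^ 2) (‖x‖ ^ 2) := by
  have h := lp.hasSum_norm (p := 2) (by norm_num) (b.repr x)
  simp only [ENNReal.toReal_ofNat, Real.rpow_two, LinearIsometryEquiv.norm_map] at h
  exact h

theorem sq_norm_le_tsum_of_sq_norm_repr_le (b : HilbertBasis ι 𝕜 E) {x : E} {f : ι → ℝ}
    (hf : Summable f) (h : ∀ i, ‖b.repr x i‖ ^ 2 ≤ f i) :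
    ‖x‖ ^ 2 ≤ ∑' i, f i :=
  hasSum_le h (b.hasSum_sq_norm_repr x) hf.hasSum

end HilbertBasis

theorem turnpike_inequality_for_p_general
    {X : Type*} [NormedAddCommGroup X] [InnerProductSpace ℂ X]
    {ι : Type*} (φ : HilbertBasis ι ℂ X)
    (ω : ℝ) (T : ℝ)
    (δp δm : ι → ℂ) (hδp : ∀ k, ω ≤ (δp k).re) (hδm : ∀ k, (δm k).re ≤ -ω)
    (u v : ι → ℂ)
    (p : ℝ → X)
    (hp : ∀ t : ℝ, ∀ k, φ.repr (p t) k =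
      u k * Complex.exp (δm k * t) + v k * Complex.exp (δp k * t))
    (C : ℝ) (y0 : X)
    (hsummable : Summable fun k =>
      ‖u k‖ ^ 2 + ‖Complex.exp (δp k * T)‖ ^ 2 * ‖v k‖ ^ 2)
    (hsum : (∑' k, (‖u k‖ ^ 2 + ‖Complex.exp (δp k * T)‖ ^ 2 * ‖v k‖ ^ 2)) ≤
      C * ‖y0‖ ^ 2) :
    ∀ t ∈ Set.Icc (0:ℝ) T,
      ‖p t‖ ≤ (Real.exp (-ω * t) + Real.exp (-ω * (T - t))) *
        (2 * Real.sqrt C) * ‖y0‖ := by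
  rintro t ⟨ht0, htT⟩
  set a := Real.exp (-ω * t)
  set b := Real.exp (-ω * (T - t))
  have hcoeff : ∀ k, ‖φ.repr (p t) k‖ ^ 2 ≤
      (a ^ 2 + b ^ 2) * (‖u k‖ ^ 2 + ‖Complex.exp (δp k * T)‖ ^ 2 * ‖v k‖ ^ 2) := by
    intro k
    rw [hp, ← mul_pow]
    refine norm_add_sq_le_of_le_mul ?_ ?_
    · rw [norm_mul, mul_comm]
      gcongr
      exact Complex.norm_exp_mul_ofReal_le (hδm k) ht0
    · rw [norm_mul, mul_comm ‖v k‖, ← mul_assoc]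
      gcongr
      exact Complex.norm_exp_mul_ofReal_le_of_le_re (hδp k) htT
  have hsq : ‖p t‖ ^ 2 ≤ (a ^ 2 + b ^ 2) * (C * ‖y0‖ ^ 2) := by
    refine (φ.sq_norm_le_tsum_of_sq_norm_repr_le (hsummable.mul_left _) hcoeff).trans ?_
    rw [tsum_mul_left]
    gcongr
  have hab : √(a ^ 2 + b ^ 2) ≤ 2 * (a + b) :=
    Real.sqrt_le_iff.2 ⟨by positivity, by nlinarith [Real.exp_pos (-ω * t), Real.exp_pos (-ω * (T - t))]⟩
  calc ‖p t‖ = √(‖p t‖ ^ 2) := (Real.sqrt_sq (norm_nonneg _)).symm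
    _ ≤ √((a ^ 2 + b ^ 2) * (C * ‖y0‖ ^ 2)) := Real.sqrt_le_sqrt hsq
    _ = √(a ^ 2 + b ^ 2) * (√C * ‖y0‖) := by
      rw [Real.sqrt_mul (by positivity), Real.sqrt_mul' _ (by positivity),
        Real.sqrt_sq (norm_nonneg _)]
    _ ≤ 2 * (a + b) * (√C * ‖y0‖) := by gcongr
    _ = (a + b) * (2 * √C) * ‖y0‖ := by ring

theorem turnpike_inequality_for_p
    {X : Type*} [NormedAddCommGroup X] [InnerProductSpace ℂ X] [CompleteSpace X]
    {ι : Type*} (φ : HilbertBasis ι ℂ X)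
    (ω : ℝ) (hω : 0 < ω) (T : ℝ) (hT : 0 < T)
    (δp δm : ι → ℂ) (hδp : ∀ k, ω ≤ (δp k).re) (hδm : ∀ k, (δm k).re ≤ -ω)
    (u v : ι → ℂ)
    (p : ℝ → X)
    (hp : ∀ t : ℝ, ∀ k, φ.repr (p t) k =
      u k * Complex.exp (δm k * t) + v k * Complex.exp (δp k * t))
    (C : ℝ) (y0 : X)
    (hsummable : Summable fun k =>
      ‖u k‖ ^ 2 + ‖Complex.exp (δp k * T)‖ ^ 2 * ‖v k‖ ^ 2)
    (hsum : (∑' k, (‖u k‖ ^ 2 + ‖Complex.exp (δp k * T)‖ ^ 2 * ‖v k‖ ^ 2)) ≤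
      C * ‖y0‖ ^ 2) :
    ∀ t ∈ Set.Icc (0:ℝ) T,
      ‖p t‖ ≤ (Real.exp (-ω * t) + Real.exp (-ω * (T - t))) *
        (2 * Real.sqrt C) * ‖y0‖ :=
  turnpike_inequality_for_p_general φ ω T δp δm hδp hδm u v p hp C y0 hsummable hsum
end
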